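/- arXiv:math/0407241 — 4 statements merged into one kernel-verified Lean document; each statement's English description precedes it below -/
import Mathlib

section
/- Let V be a finite-dimensional real inner product space with metric g, let p ∈ V* with 2t = g^{-1}(p,p), and let a₁, b₁, a₂, b₂ be real numbers. Define the endomorphism J of V ⊕ V* by J(X, 0) = (0, a₁·g(X,·) + b₁·p(X)·p) and J(0, α) = (−a₂·g^{-1}(α,·) − b₂·g^{-1}(p,α)·g^{-1}(p,·), 0). Then J² = −Id if and only if a₁a₂ = 1 and (a₁ + 2t·b₁)(a₂ + 2t·b₂) = 1, provided n > 1 and p ≠ 0. -/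
open scoped RealInnerProductSpace

/-- Proposition 2: the diagonal-type operator `J` on `V ⊕ V*` (the dual `V*` being
identified with `V` via the metric, `q` being the metric dual of the covector `p`,
with `2t = g⁻¹(p,p) = ⟪q,q⟫`) satisfies `J² = −Id` iff `a₁a₂ = 1` and
`(a₁ + 2t·b₁)(a₂ + 2t·b₂) = 1`, provided `n > 1` and `p ≠ 0`. -/
theorem stmt_3 (V : Type*) [NormedAddCommGroup V] [InnerProductSpace ℝ V]
    [FiniteDimensional ℝ V] (hn : 1 < Module.finrank ℝ V)
    (q : V) (hq : q ≠ 0)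
    (a₁ b₁ a₂ b₂ t : ℝ) (ht : ⟪q, q⟫ = 2 * t)
    (J : V × V → V × V)
    (hJ : ∀ Z : V × V,
      J Z = (-(a₂ • Z.2 + (b₂ * ⟪q, Z.2⟫) • q), a₁ • Z.1 + (b₁ * ⟪q, Z.1⟫) • q)) :
    (∀ Z : V × V, J (J Z) = -Z) ↔
      (a₁ * a₂ = 1 ∧ (a₁ + 2 * t * b₁) * (a₂ + 2 * t * b₂) = 1) := by
  have htpos : 0 < t := by
    have h1 : (0:ℝ) ≤ ⟪q, q⟫ := real_inner_self_nonneg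
    have h2 : ⟪q, q⟫ ≠ 0 := fun h => hq (inner_self_eq_zero.mp h)
    have h3 : (0:ℝ) < ⟪q, q⟫ := h1.lt_of_ne (Ne.symm h2)
    linarith
  constructor
  · intro H
    -- get a nonzero vector orthogonal to q
    obtain ⟨e, heK, he0⟩ : ∃ e ∈ (ℝ ∙ q)ᗮ, e ≠ 0 := by
      apply Submodule.exists_mem_ne_zero_of_ne_bot
      intro hbot
      have h1 : Module.finrank ℝ (ℝ ∙ q) + Module.finrank ℝ (ℝ ∙ q)ᗮ
          = Module.finrank ℝ V := Submodule.finrank_add_finrank_orthogonal _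
      rw [hbot, finrank_span_singleton hq] at h1
      simp at h1
      omega
    have hqe : ⟪q, e⟫ = 0 := heK q (Submodule.mem_span_singleton_self q)
    have H1 := H (e, 0)
    have H2 := H (q, 0)
    rw [hJ, hJ] at H1 H2
    simp only [Prod.ext_iff, Prod.fst_neg, Prod.snd_neg, Prod.fst, Prod.snd] at H1 H2
    have He := H1.1
    have Hq := H2.1
    simp only [inner_zero_right, mul_zero, zero_smul, add_zero, smul_zero, neg_zero,
      inner_neg_right, inner_add_right, inner_smul_right, smul_add, smul_smul,
      neg_add_rev, neg_neg, hqe, ht] at He Hq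
    have ha : a₁ * a₂ = 1 := by
      have h0 : (a₂ * a₁ - 1) • e = 0 := by
        rw [sub_smul, one_smul, sub_eq_zero]
        linear_combination (norm := module) -He
      rcases smul_eq_zero.mp h0 with h | h
      · linear_combination h
      · exact absurd h he0
    refine ⟨ha, ?_⟩
    have hc : (a₂ * a₁ + 2 * t * (a₂ * b₁ + b₂ * a₁ + b₂ * b₁ * (2 * t)) - 1) • q = 0 := by
      rw [sub_smul, one_smul, sub_eq_zero]
      linear_combination (norm := module) -Hq
    rcases smul_eq_zero.mp hc with h | h
    · linear_combination h
    · exact absurd h hq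
  · rintro ⟨ha, hb⟩ Z
    have hc : a₂ * b₁ + b₂ * a₁ + b₂ * b₁ * (2 * t) = 0 := by
      have h2t : (2 * t) ≠ 0 := by positivity
      have h : 2 * t * (a₂ * b₁ + b₂ * a₁ + b₂ * b₁ * (2 * t)) = 0 := by nlinarith
      exact (mul_eq_zero.mp h).resolve_left h2t
    rw [hJ, hJ]
    simp only [Prod.ext_iff, Prod.fst_neg, Prod.snd_neg, Prod.fst, Prod.snd]
    constructor
    · simp only [inner_add_right, inner_smul_right, ht]
      match_scalars
      all_goals first
        | linear_combination -ha
        | linear_combination (-(⟪q, Z.1⟫)) * hc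
        | linear_combination (-(⟪q, Z.2⟫)) * hc
    · simp only [inner_neg_right, inner_add_right, inner_smul_right, ht]
      match_scalars
      all_goals first
        | linear_combination -ha
        | linear_combination (-(⟪q, Z.1⟫)) * hc
        | linear_combination (-(⟪q, Z.2⟫)) * hc
end

section
/- Let A > 0, c, t ≥ 0, λ > 0, λ' real with λ + 2tλ' > 0 and A² − 2ctλ² > 0, and let n > 1. On V ⊕ V* with V an n-dimensional inner product space and p ∈ V* with ‖p‖² = 2t, define J by blocks J^{(1)}_{ij} = (A/λ)g_{ij} − ((cλ³ + A²λ')/(Aλ(λ + 2tλ')))p_ip_j and J^{ij}_{(2)} = (λ/A)g^{ij} + ((cλ³ + A²λ')/(A(A² − 2ctλ²)))g^{0i}g^{0j}, and define G by blocks G^{(1)}_{ij} = Ag_{ij} − (cλ²/A)p_ip_j and G^{ij}_{(2)} = (λ²/A)g^{ij} + ((cλ⁴ + 2A²λ'(λ + λ't))/(A(A² − 2ctλ²)))g^{0i}g^{0j}, where G acts diagonally (horizontal and vertical parts orthogonal). Then G(JX, JY) = G(X, Y) for all X, Y ∈ V ⊕ V*, i.e., G is Hermitian with respect to J. -/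
open scoped RealInnerProductSpace

set_option maxHeartbeats 4000000 in
/-- Theorems 5 and 7 pointwise: on `V ⊕ V*` (the dual `V*` being identified with `V`
via the metric, the covector `p` being identified with its metric dual `q`, with
`⟪q,q⟫ = 2t`), the diagonal metric `G` with blocks (24) is Hermitian with respect to
the complex structure `J` with blocks (13): `G(JX, JY) = G(X, Y)`. -/
theorem stmt_16 (V : Type*) [NormedAddCommGroup V] [InnerProductSpace ℝ V]
    [FiniteDimensional ℝ V] (hn : 1 < Module.finrank ℝ V)
    (q : V) (A c t lam lam' : ℝ)
    (ht0 : 0 ≤ t) (ht : ⟪q, q⟫ = 2 * t)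
    (hA : 0 < A) (hlam : 0 < lam)
    (h1 : 0 < lam + 2 * t * lam') (h2 : 0 < A ^ 2 - 2 * c * t * lam ^ 2)
    (J : V × V → V × V)
    (hJ : ∀ Z : V × V,
      J Z = (-((lam / A) • Z.2 +
              ((c * lam ^ 3 + A ^ 2 * lam') / (A * (A ^ 2 - 2 * c * t * lam ^ 2)) *
                ⟪q, Z.2⟫) • q),
            (A / lam) • Z.1 -
              ((c * lam ^ 3 + A ^ 2 * lam') / (A * lam * (lam + 2 * t * lam')) *
                ⟪q, Z.1⟫) • q))
    (G : V × V → V × V → ℝ)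
    (hG : ∀ Z W : V × V,
      G Z W = (A * ⟪Z.1, W.1⟫ - (c * lam ^ 2 / A) * ⟪q, Z.1⟫ * ⟪q, W.1⟫) +
        ((lam ^ 2 / A) * ⟪Z.2, W.2⟫ +
          ((c * lam ^ 4 + 2 * A ^ 2 * lam' * (lam + lam' * t)) /
            (A * (A ^ 2 - 2 * c * t * lam ^ 2))) * ⟪q, Z.2⟫ * ⟪q, W.2⟫)) :
    ∀ Z W : V × V, G (J Z) (J W) = G Z W := by
  intro Z W
  rw [hJ, hJ, hG, hG]
  simp only [inner_sub_left, inner_sub_right, inner_add_left, inner_add_right,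
    inner_neg_left, inner_neg_right, inner_smul_left, inner_smul_right,
    real_inner_comm q Z.1, real_inner_comm q Z.2, real_inner_comm q W.1,
    real_inner_comm q W.2, RCLike.conj_to_real, ht]
  field_simp [hA.ne', hlam.ne', (show A ^ 2 - lam ^ 2 * c * 2 * t ≠ 0 by intro h; apply h2.ne'; linarith),
    (show lam + lam' * 2 * t ≠ 0 by intro h; apply h1.ne'; linarith)]
  ring_nf
end

section
/- Let A > 0, c ∈ ℝ, t ≥ 0, λ > 0, λ' real with λ + 2tλ' > 0, A² − 2ctλ² > 0, and (λ + 2tλ')² appearing as denominators nonzero. Define G^{ij}_{(2)} = (λ²/A)g^{ij} + ((cλ⁴ + 2A²λ'(λ + λ't))/(A(A² − 2ctλ²)))g^{0i}g^{0j} and H^{(2)}_{jk} = (A/λ²)g_{jk} − ((cλ⁴ + 2A²λ'(λ + λ't))/(Aλ²(λ + 2λ't)²))p_jp_k on an n-dimensional inner product space with covector p satisfying g^{ij}p_ip_j = 2t. Then G^{ij}_{(2)}H^{(2)}_{jk} = δ^i_k. -/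
open scoped RealInnerProductSpace

/-- Verification of the inverse formula (25) for the vertical block of the Kähler
metric (24): with `G^{ij}_{(2)} = (λ²/A)g^{ij} + ((cλ⁴ + 2A²λ'(λ + λ't))/(A(A² − 2ctλ²)))g^{0i}g^{0j}`
and `H^{(2)}_{jk} = (A/λ²)g_{jk} − ((cλ⁴ + 2A²λ'(λ + λ't))/(Aλ²(λ + 2λ't)²))p_j p_k`,
one has `G^{ij}_{(2)} H^{(2)}_{jk} = δ^i_k`. The covector `p` is identified with its
metric dual `q`, with `⟪q,q⟫ = 2t`; the contraction becomes composition of the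
associated endomorphisms. -/
theorem stmt_18 (V : Type*) [NormedAddCommGroup V] [InnerProductSpace ℝ V]
    [FiniteDimensional ℝ V]
    (q : V) (A c t lam lam' : ℝ)
    (ht0 : 0 ≤ t) (ht : ⟪q, q⟫ = 2 * t)
    (hA : 0 < A) (hlam : 0 < lam)
    (h1 : 0 < lam + 2 * t * lam') (h2 : 0 < A ^ 2 - 2 * c * t * lam ^ 2) :
    ∀ Y : V,
      (lam ^ 2 / A) • ((A / lam ^ 2) • Y -
          ((c * lam ^ 4 + 2 * A ^ 2 * lam' * (lam + lam' * t)) /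
            (A * lam ^ 2 * (lam + 2 * lam' * t) ^ 2) * ⟪q, Y⟫) • q) +
        ((c * lam ^ 4 + 2 * A ^ 2 * lam' * (lam + lam' * t)) /
            (A * (A ^ 2 - 2 * c * t * lam ^ 2)) *
          ⟪q, (A / lam ^ 2) • Y -
            ((c * lam ^ 4 + 2 * A ^ 2 * lam' * (lam + lam' * t)) /
              (A * lam ^ 2 * (lam + 2 * lam' * t) ^ 2) * ⟪q, Y⟫) • q⟫) • q = Y := by
  intro Y
  have h1' : lam + 2 * lam' * t ≠ 0 := by nlinarith [h1]
  have hA' : A ≠ 0 := hA.ne'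
  have hlam' : lam ≠ 0 := hlam.ne'
  have h2' : A ^ 2 - 2 * c * t * lam ^ 2 ≠ 0 := h2.ne'
  simp only [inner_sub_right, real_inner_smul_right, ht]
  match_scalars
  · field_simp
  · field_simp
    have h2'' : A ^ 2 - lam ^ 2 * c * 2 * t ≠ 0 := by
      rw [show A ^ 2 - lam ^ 2 * c * 2 * t = A ^ 2 - 2 * c * t * lam ^ 2 by ring]; exact h2'
    rw [mul_zero]; apply mul_eq_zero_of_right
    rw [neg_add_eq_zero, eq_div_iff h2'']
    ring
end

section
/- Let κ be a real number and (V, g) an n-dimensional real inner product space with n ≥ 2. Define the almost complex structure model: suppose J is an endomorphism of V ⊕ V* with J² = −Id interchanging V and V*, G a J-Hermitian positive definite inner product on V ⊕ V* making V and V* orthogonal, and suppose the curvature tensor K on W = V ⊕ V* has the block form (29) with blocks K(X,Y)Z = κ(G(Y,Z)X − G(X,Z)Y) on the horizontal block (X,Y,Z ∈ V-part). Then the holomorphic sectional curvature in horizontal directions, H(X) = G(K(X, JX)JX, X)/G(X,X)² for nonzero X in the horizontal part, is NOT in general equal to the holomorphic sectional curvature computed from the constant holomorphic curvature model K₀(X,Y)Z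 = (μ/4)(G(Y,Z)X − G(X,Z)Y + G(JY,Z)JX − G(JX,Z)JY + 2G(JY,X)JZ) for any constant μ, unless κ = 0: specifically, if the horizontal-horizontal block of K equals κ(G(Y,Z)X − G(X,Z)Y) with X,Y,Z horizontal and JX vertical, and the curvature tensor of constant holomorphic sectional curvature μ restricted to horizontal X,Y,Z (with J mapping horizontal to vertical) equals (μ/4)(G(Y,Z)X − G(X,Z)Y), then matching the cross blocks K(X, JY)Z forces κ = 0. -/
open scoped RealInnerProductSpace

/-- Remark after (29): the Kähler structure `(G, J)` on `T*M` cannot have constant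
holomorphic sectional curvature unless the curvature factor vanishes. Abstract model:
`W` carries a Hermitian structure `(G, J)` with `J² = −Id` interchanging two orthogonal
distributions `H` (horizontal) and `V` (vertical); the curvature tensor `K` has the
block form (29), i.e. its horizontal-horizontal block is the constant-curvature model
`κ(G(Y,Z)X − G(X,Z)Y)` and its cross block is `K(JX,Y)Z = κ'·G(X,Y)·JZ` for horizontal
`X, Y, Z`. If moreover `K` equals the constant holomorphic sectional curvature model
`K₀(X,Y)Z = (μ/4)(G(Y,Z)X − G(X,Z)Y + G(JY,Z)JX − G(JX,Z)JY + 2G(JY,X)JZ)`,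
then necessarily `κ = 0`. -/
theorem stmt_19 (W : Type*) [NormedAddCommGroup W] [InnerProductSpace ℝ W]
    [FiniteDimensional ℝ W]
    (κ κ' μ : ℝ) (J : W →ₗ[ℝ] W)
    (hJ2 : ∀ Z : W, J (J Z) = -Z)
    (hherm : ∀ X Y : W, ⟪J X, J Y⟫ = ⟪X, Y⟫)
    (H V : Submodule ℝ W)
    (hcompl : IsCompl H V)
    (horth : ∀ x ∈ H, ∀ y ∈ V, ⟪x, y⟫ = 0)
    (hJH : ∀ x ∈ H, J x ∈ V)
    (hdim : 2 ≤ Module.finrank ℝ H)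
    (K : W → W → W → W)
    (hKh : ∀ X ∈ H, ∀ Y ∈ H, ∀ Z ∈ H,
      K X Y Z = κ • (⟪Y, Z⟫ • X - ⟪X, Z⟫ • Y))
    (hKcross : ∀ X ∈ H, ∀ Y ∈ H, ∀ Z ∈ H,
      K (J X) Y Z = (κ' * ⟪X, Y⟫) • J Z)
    (hKmodel : ∀ X Y Z : W,
      K X Y Z = (μ / 4) • (⟪Y, Z⟫ • X - ⟪X, Z⟫ • Y + ⟪J Y, Z⟫ • J X -
        ⟪J X, Z⟫ • J Y + (2 * ⟪J Y, X⟫) • J Z)) :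
    κ = 0 := by
  -- pick an orthonormal pair in H
  have hd : 1 < Module.finrank ℝ H := hdim
  let e := stdOrthonormalBasis ℝ H
  set X : W := (e ⟨0, by omega⟩ : W) with hXdef
  set Y : W := (e ⟨1, hd⟩ : W) with hYdef
  have hX : X ∈ H := (e ⟨0, by omega⟩).2
  have hY : Y ∈ H := (e ⟨1, hd⟩).2
  have hXX : ⟪X, X⟫ = 1 := by
    have := e.orthonormal.1 ⟨0, by omega⟩
    have h2 : ⟪(e ⟨0, by omega⟩ : H), (e ⟨0, by omega⟩ : H)⟫ = 1 := by
      rw [real_inner_self_eq_norm_sq, this]; norm_num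
    simpa only [Submodule.coe_inner] using h2
  have hYY : ⟪Y, Y⟫ = 1 := by
    have := e.orthonormal.1 ⟨1, hd⟩
    have h2 : ⟪(e ⟨1, hd⟩ : H), (e ⟨1, hd⟩ : H)⟫ = 1 := by
      rw [real_inner_self_eq_norm_sq, this]; norm_num
    simpa only [Submodule.coe_inner] using h2
  have hXY : ⟪X, Y⟫ = 0 := by
    have h2 := e.orthonormal.2 (i := ⟨0, by omega⟩) (j := ⟨1, hd⟩) (by simp)
    simpa only [Submodule.coe_inner] using h2
  have hXne : X ≠ 0 := by
    intro h; rw [h] at hXX; simp at hXX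
  -- orthogonality facts
  have hHV : ∀ x ∈ H, ∀ y ∈ V, ⟪y, x⟫ = 0 := fun x hx y hy => by
    rw [real_inner_comm]; exact horth x hx y hy
  have hJXY : ⟪J X, Y⟫ = 0 := hHV Y hY _ (hJH X hX)
  have hJYY : ⟪J Y, Y⟫ = 0 := hHV Y hY _ (hJH Y hY)
  have hJYX : ⟪J Y, X⟫ = 0 := hHV X hX _ (hJH Y hY)
  have hJYJX : ⟪J Y, J X⟫ = 0 := by rw [hherm, real_inner_comm]; exact hXY
  have hJJX : ⟪J (J X), Y⟫ = 0 := by rw [hJ2]; simp [inner_neg_left, hXY]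
  -- μ = 0 from the cross block
  have hμ : μ = 0 := by
    have h1 := hKcross X hX Y hY Y hY
    have h2 := hKmodel (J X) Y Y
    rw [h1, hXY] at h2
    rw [hYY, hJXY, hJYY, hJJX, hJYJX] at h2
    simp only [mul_zero, zero_smul, one_smul, sub_zero, add_zero, zero_smul,
      smul_zero] at h2
    have h3 : (μ / 4) • J X = 0 := by
      exact h2.symm
    have hJXne : J X ≠ 0 := by
      intro h
      have := hJ2 X
      rw [h] at this
      simp at this
      exact hXne this
    rcases smul_eq_zero.mp h3 with h | h
    · linarith
    · exact absurd h hJXne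
  -- κ = μ/4 from the horizontal block
  have h1 := hKh X hX Y hY Y hY
  have h2 := hKmodel X Y Y
  rw [h1] at h2
  rw [hYY, hXY, hJYY, hJXY, hJYX, hμ] at h2
  simp only [one_smul, zero_smul, sub_zero, add_zero, mul_zero, smul_zero,
    zero_div, zero_smul, smul_eq_zero] at h2
  rcases h2 with h | h
  · exact h
  · exact absurd (by simpa using h) hXne
end
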